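/- arXiv:1306.4070 — 2 statements merged into one kernel-verified Lean document; each statement's English description precedes it below -/
import Mathlib

section
/- Let H ∈ (0,1) and let n ≥ 1 be an integer. Then the function ξ ↦ |ξ|^{1−2H} (e^{−i(n+1)ξ} − e^{−inξ})(e^{iξ} − 1)/ξ² is integrable on ℝ, its integral is real, and (1/(2π)) ∫_ℝ |ξ|^{1−2H} · (e^{−i(n+1)ξ} − e^{−inξ})(e^{iξ} − 1)/ξ² dξ = ((n+1)^{2H} − 2 n^{2H} + (n−1)^{2H}) / (2 sin(πH)·Γ(2H+1)). -/
open MeasureTheory Real Set Filter Topology Function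


-- integrability of (1 - cos x) * x^(-1-s) on Ioi 0, for 0 < s < 2
lemma integrableOn_one_sub_cos {s : ℝ} (h0 : 0 < s) (h2 : s < 2) :
    IntegrableOn (fun x : ℝ => (1 - Real.cos x) * x ^ (-1 - s)) (Ioi 0) := by
  have hmeas : AEStronglyMeasurable (fun x : ℝ => (1 - Real.cos x) * x ^ (-1 - s))
      (volume.restrict (Ioi (0:ℝ))) := by
    refine (Measurable.aestronglyMeasurable ?_)
    exact ((measurable_const.sub Real.measurable_cos).mul
      (measurable_id.pow_const _))
  rw [← Ioc_union_Ioi_eq_Ioi (zero_le_one : (0:ℝ) ≤ 1), integrableOn_union]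
  constructor
  · have hint : IntegrableOn (fun x : ℝ => x ^ (1 - s) / 2) (Ioc (0:ℝ) 1) := by
      refine Integrable.div_const ?_ 2
      refine (intervalIntegrable_iff_integrableOn_Ioc_of_le
        (zero_le_one)).mp ?_
      exact intervalIntegral.intervalIntegrable_rpow' (by linarith)
    refine Integrable.mono' hint (hmeas.mono_measure
      (Measure.restrict_mono Ioc_subset_Ioi_self le_rfl)) ?_
    filter_upwards [ae_restrict_mem measurableSet_Ioc] with x hx
    have hx0 : 0 < x := hx.1
    have h1 : 0 ≤ 1 - Real.cos x := by nlinarith [Real.cos_le_one x]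
    have h2' : 1 - Real.cos x ≤ x ^ 2 / 2 := by
      nlinarith [Real.one_sub_sq_div_two_le_cos (x := x)]
    rw [Real.norm_eq_abs, abs_mul, abs_of_nonneg h1,
      abs_of_nonneg (Real.rpow_nonneg hx0.le _)]
    have hxx : x ^ (1 - s) = x ^ 2 * x ^ (-1 - s) := by
      rw [← Real.rpow_natCast x 2, ← Real.rpow_add hx0]
      norm_num [show (2:ℝ) + (-1 - s) = 1 - s by ring]
    rw [hxx]
    have := Real.rpow_nonneg hx0.le (-1 - s)
    calc (1 - Real.cos x) * x ^ (-1 - s) ≤ x ^ 2 / 2 * x ^ (-1 - s) := by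
          exact mul_le_mul_of_nonneg_right h2' this
      _ = x ^ 2 * x ^ (-1 - s) / 2 := by ring
  · have hint : IntegrableOn (fun x : ℝ => 2 * x ^ (-1 - s)) (Ioi (1:ℝ)) :=
      (integrableOn_Ioi_rpow_of_lt (by linarith) one_pos).const_mul 2
    refine Integrable.mono' hint (hmeas.mono_measure
      (Measure.restrict_mono (Ioi_subset_Ioi zero_le_one) le_rfl)) ?_
    filter_upwards [ae_restrict_mem measurableSet_Ioi] with x hx
    have hx0 : (0:ℝ) < x := lt_trans one_pos hx
    have h1 : 0 ≤ 1 - Real.cos x := by nlinarith [Real.cos_le_one x]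
    rw [Real.norm_eq_abs, abs_mul, abs_of_nonneg h1,
      abs_of_nonneg (Real.rpow_nonneg hx0.le _)]
    have := Real.rpow_nonneg hx0.le (-1 - s)
    nlinarith [Real.neg_one_le_cos x]

-- integrability of t^(s-1)/(1+t^2) on Ioi 0
lemma integrableOn_rpow_div_one_add_sq {s : ℝ} (h0 : 0 < s) (h2 : s < 2) :
    IntegrableOn (fun t : ℝ => t ^ (s - 1) / (1 + t ^ 2)) (Ioi 0) := by
  have hmeas : AEStronglyMeasurable (fun t : ℝ => t ^ (s - 1) / (1 + t ^ 2))
      (volume.restrict (Ioi (0:ℝ))) := by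
    refine Measurable.aestronglyMeasurable ?_
    exact (measurable_id.pow_const _).div
      (measurable_const.add (measurable_id.pow_const 2))
  rw [← Ioc_union_Ioi_eq_Ioi (zero_le_one : (0:ℝ) ≤ 1), integrableOn_union]
  constructor
  · have hint : IntegrableOn (fun t : ℝ => t ^ (s - 1)) (Ioc (0:ℝ) 1) := by
      refine (intervalIntegrable_iff_integrableOn_Ioc_of_le
        (zero_le_one)).mp ?_
      exact intervalIntegral.intervalIntegrable_rpow' (by linarith)
    refine Integrable.mono' hint (hmeas.mono_measure
      (Measure.restrict_mono Ioc_subset_Ioi_self le_rfl)) ?_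
    filter_upwards [ae_restrict_mem measurableSet_Ioc] with t ht
    have ht0 : 0 < t := ht.1
    have hb : (0:ℝ) < 1 + t ^ 2 := by positivity
    rw [Real.norm_eq_abs, abs_div, abs_of_nonneg (Real.rpow_nonneg ht0.le _),
      abs_of_nonneg hb.le]
    have := Real.rpow_nonneg ht0.le (s - 1)
    rw [div_le_iff₀ hb]
    nlinarith
  · have hint : IntegrableOn (fun t : ℝ => t ^ (s - 3)) (Ioi (1:ℝ)) :=
      integrableOn_Ioi_rpow_of_lt (by linarith) one_pos
    refine Integrable.mono' hint (hmeas.mono_measure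
      (Measure.restrict_mono (Ioi_subset_Ioi zero_le_one) le_rfl)) ?_
    filter_upwards [ae_restrict_mem measurableSet_Ioi] with t ht
    have ht0 : (0:ℝ) < t := lt_trans one_pos ht
    have hb : (0:ℝ) < 1 + t ^ 2 := by positivity
    rw [Real.norm_eq_abs, abs_div, abs_of_nonneg (Real.rpow_nonneg ht0.le _),
      abs_of_nonneg hb.le]
    rw [div_le_iff₀ hb]
    have h3 : t ^ (s - 3) * t ^ 2 = t ^ (s - 1) := by
      rw [← Real.rpow_natCast t 2, ← Real.rpow_add ht0]
      norm_num [show s - 3 + 2 = s - 1 by ring]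
    have h4 : t ^ (s - 1) ≤ t ^ (s - 3) * (1 + t ^ 2) := by
      rw [mul_add, h3]
      have := Real.rpow_nonneg ht0.le (s - 3)
      nlinarith
    exact h4


lemma integrableOn_exp_neg_mul_cos {t : ℝ} (ht : 0 < t) :
    IntegrableOn (fun x : ℝ => Real.exp (-(t * x)) * Real.cos x) (Ioi 0) := by
  refine Integrable.mono' ((exp_neg_integrableOn_Ioi 0 ht).congr_fun
    (fun x _ => show Real.exp (-t * x) = Real.exp (-(t * x)) by rw [neg_mul]) measurableSet_Ioi) ?_ ?_
  · exact (Measurable.aestronglyMeasurable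
      ((measurable_const.mul measurable_id).neg.exp.mul Real.measurable_cos))
  · filter_upwards with x
    rw [Real.norm_eq_abs, abs_mul, abs_of_nonneg (Real.exp_pos _).le]
    calc Real.exp (-(t*x)) * |Real.cos x| ≤ Real.exp (-(t*x)) * 1 :=
          mul_le_mul_of_nonneg_left (Real.abs_cos_le_one x) (Real.exp_pos _).le
      _ = Real.exp (-(t*x)) := mul_one _

lemma integral_exp_neg_mul_cos {t : ℝ} (ht : 0 < t) :
    ∫ x in Ioi (0:ℝ), Real.exp (-(t * x)) * Real.cos x = t / (1 + t ^ 2) := by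
  have hc : (0:ℝ) < 1 + t ^ 2 := by positivity
  set F : ℝ → ℝ := fun x => Real.exp (-(t * x)) * (Real.sin x - t * Real.cos x) / (1 + t ^ 2)
    with hF
  have hderiv : ∀ x ∈ Ici (0:ℝ), HasDerivAt F (Real.exp (-(t * x)) * Real.cos x) x := by
    intro x _
    have h1 : HasDerivAt (fun x : ℝ => -(t * x)) (-t) x := by
      simpa using ((hasDerivAt_id x).const_mul (-t))
    have h2 : HasDerivAt (fun x : ℝ => Real.exp (-(t * x)))
        (Real.exp (-(t * x)) * (-t)) x := h1.exp
    have h3 : HasDerivAt (fun x : ℝ => Real.sin x - t * Real.cos x)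
        (Real.cos x - t * (-Real.sin x)) x :=
      (Real.hasDerivAt_sin x).sub ((Real.hasDerivAt_cos x).const_mul t)
    have h4 := (h2.mul h3).div_const (1 + t ^ 2)
    refine HasDerivAt.congr_deriv h4 ?_
    rw [div_eq_iff hc.ne']
    ring
  have htend : Tendsto F atTop (𝓝 0) := by
    refine squeeze_zero_norm (a := fun x => (1 + t) / (1 + t ^ 2) * Real.exp (-(t * x))) ?_ ?_
    · intro x
      rw [hF]
      simp only [Real.norm_eq_abs, abs_div, abs_mul, abs_of_nonneg (Real.exp_pos _).le,
        abs_of_nonneg hc.le]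
      rw [div_le_iff₀ hc, div_mul_eq_mul_div, div_mul_eq_mul_div, mul_div_assoc,
        div_self hc.ne', mul_one]
      have : |Real.sin x - t * Real.cos x| ≤ 1 + t := by
        calc |Real.sin x - t * Real.cos x| ≤ |Real.sin x| + |t * Real.cos x| := abs_sub _ _
          _ ≤ 1 + t := by
            refine add_le_add (Real.abs_sin_le_one x) ?_
            rw [abs_mul, abs_of_nonneg ht.le]
            calc t * |Real.cos x| ≤ t * 1 :=
                mul_le_mul_of_nonneg_left (Real.abs_cos_le_one x) ht.le
              _ = t := mul_one t
      calc Real.exp (-(t*x)) * |Real.sin x - t * Real.cos x|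
          ≤ Real.exp (-(t*x)) * (1 + t) :=
            mul_le_mul_of_nonneg_left this (Real.exp_pos _).le
        _ = (1 + t) * Real.exp (-(t*x)) := mul_comm _ _
    · have h5 : Tendsto (fun x : ℝ => -(t * x)) atTop atBot := by
        have h6 := (tendsto_const_mul_atTop_of_pos ht).mpr (tendsto_id (α := ℝ))
        exact tendsto_neg_atBot_iff.mpr h6
      have := Real.tendsto_exp_atBot.comp h5
      simpa using this.const_mul ((1 + t) / (1 + t ^ 2))
  have key := integral_Ioi_of_hasDerivAt_of_tendsto' hderiv (integrableOn_exp_neg_mul_cos ht)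
    htend
  rw [key, hF]
  simp
  field_simp

lemma integral_exp_neg_mul_Ioi0 {t : ℝ} (ht : 0 < t) :
    ∫ x in Ioi (0:ℝ), Real.exp (-(t * x)) = 1 / t := by
  have := integral_rpow_mul_exp_neg_mul_Ioi (a := 1) (r := t) one_pos ht
  simp only [sub_self, Real.rpow_one, Real.rpow_zero, one_mul, Real.Gamma_one, mul_one] at this
  simpa using this

lemma integral_one_sub_cos_mul_exp {t : ℝ} (ht : 0 < t) :
    ∫ x in Ioi (0:ℝ), (1 - Real.cos x) * Real.exp (-(t * x)) = 1 / (t * (1 + t ^ 2)) := by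
  have h1 : IntegrableOn (fun x : ℝ => Real.exp (-(t * x))) (Ioi 0) :=
    (exp_neg_integrableOn_Ioi 0 ht).congr_fun (fun x _ => by simp only [neg_mul]) measurableSet_Ioi
  have h2 := integrableOn_exp_neg_mul_cos ht
  have : ∀ x : ℝ, (1 - Real.cos x) * Real.exp (-(t * x)) =
      Real.exp (-(t * x)) - Real.exp (-(t * x)) * Real.cos x := fun x => by ring
  simp_rw [this]
  rw [integral_sub h1 h2, integral_exp_neg_mul_Ioi0 ht, integral_exp_neg_mul_cos ht]
  have hc : (0:ℝ) < 1 + t ^ 2 := by positivity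
  field_simp
  ring

lemma integral_rpow_div_one_add_sq_eq_Gamma {s : ℝ} (h0 : 0 < s) (h2 : s < 2) :
    ∫ t in Ioi (0:ℝ), t ^ (s - 1) / (1 + t ^ 2)
      = Real.Gamma (s / 2) * Real.Gamma (1 - s / 2) / 2 := by
  have hs2 : 0 < 1 - s / 2 := by linarith
  have hs2' : 0 < s / 2 := by linarith
  set μ := volume.restrict (Ioi (0:ℝ)) with hμ
  set f : ℝ → ℝ → ℝ :=
    fun y t => Real.exp (-y) * (t ^ (s - 1) * Real.exp (-y * t ^ (2:ℝ))) with hfdef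
  have hmeas : AEStronglyMeasurable (uncurry f) (μ.prod μ) := by
    apply Measurable.aestronglyMeasurable
    apply Measurable.mul
    · exact measurable_fst.neg.exp
    · exact (measurable_snd.pow_const _).mul
        ((measurable_fst.neg.mul (measurable_snd.pow_const _)).exp)
  have hsec : ∀ y ∈ Ioi (0:ℝ), Integrable (fun t => f y t) μ := by
    intro y hy
    exact ((integrableOn_rpow_mul_exp_neg_mul_rpow (by linarith : (-1:ℝ) < s - 1)
      two_pos hy).const_mul _)
  have hinner : ∀ y ∈ Ioi (0:ℝ),
      ∫ t, f y t ∂μ = Real.Gamma (s / 2) / 2 * (Real.exp (-y) * y ^ (1 - s / 2 - 1)) := by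
    intro y hy
    rw [hfdef]
    simp only
    rw [integral_const_mul, hμ,
      integral_rpow_mul_exp_neg_mul_rpow two_pos (by linarith : (-1:ℝ) < s - 1) hy]
    rw [show (s - 1 + 1) / 2 = s / 2 by ring, show -(s - 1 + 1) / 2 = 1 - s / 2 - 1 by ring]
    ring
  have hnorm : ∀ y ∈ Ioi (0:ℝ), ∫ t, ‖f y t‖ ∂μ = ∫ t, f y t ∂μ := by
    intro y hy
    refine integral_congr_ae ?_
    filter_upwards [ae_restrict_mem measurableSet_Ioi] with t ht
    have ht' : (0:ℝ) < t := ht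
    rw [Real.norm_eq_abs, abs_of_nonneg]
    exact mul_nonneg (Real.exp_pos _).le
      (mul_nonneg (Real.rpow_nonneg ht'.le _) (Real.exp_pos _).le)
  have hint : Integrable (uncurry f) (μ.prod μ) := by
    rw [integrable_prod_iff hmeas]
    constructor
    · filter_upwards [ae_restrict_mem measurableSet_Ioi] with y hy
      exact hsec y hy
    · have base : Integrable (fun y : ℝ =>
          Real.Gamma (s / 2) / 2 * (Real.exp (-y) * y ^ (1 - s / 2 - 1))) μ :=
        (Real.GammaIntegral_convergent hs2).const_mul _
      refine base.congr ?_
      filter_upwards [ae_restrict_mem measurableSet_Ioi] with y hy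
      simp only [uncurry_apply_pair]
      rw [hnorm y hy, hinner y hy]
  have hswap := integral_integral_swap hint
  have hLHS : ∫ y, ∫ t, f y t ∂μ ∂μ =
      Real.Gamma (s / 2) * Real.Gamma (1 - s / 2) / 2 := by
    rw [integral_congr_ae (g := fun y =>
        Real.Gamma (s / 2) / 2 * (Real.exp (-y) * y ^ (1 - s / 2 - 1)))]
    · rw [integral_const_mul, hμ, ← Real.Gamma_eq_integral hs2]
      ring
    · filter_upwards [ae_restrict_mem measurableSet_Ioi] with y hy
      exact hinner y hy
  have hRHS : ∫ t, ∫ y, f y t ∂μ ∂μ = ∫ t in Ioi (0:ℝ), t ^ (s - 1) / (1 + t ^ 2) := by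
    rw [hμ]
    refine setIntegral_congr_fun measurableSet_Ioi (fun t ht => ?_)
    have ht0 : (0:ℝ) < t := ht
    have ht2 : t ^ (2:ℝ) = t ^ 2 := by
      rw [show (2:ℝ) = ((2:ℕ):ℝ) by norm_num, Real.rpow_natCast]
    have hc : (0:ℝ) < 1 + t ^ 2 := by positivity
    have heq : ∀ y : ℝ, f y t = t ^ (s - 1) * Real.exp (-((1 + t ^ 2) * y)) := by
      intro y
      rw [hfdef]
      simp only [ht2]
      rw [show -((1 + t ^ 2) * y) = -y + -y * t ^ 2 by ring, Real.exp_add]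
      ring
    simp_rw [heq]
    rw [integral_const_mul, integral_exp_neg_mul_Ioi0 hc]
    field_simp
  rw [← hRHS, ← hswap, hLHS]
lemma Gamma_add_one_pos {s : ℝ} (h0 : 0 < s) : 0 < Real.Gamma (s + 1) :=
  Real.Gamma_pos_of_pos (by linarith)

lemma integral_one_sub_cos_rpow {s : ℝ} (h0 : 0 < s) (h2 : s < 2) :
    ∫ x in Ioi (0:ℝ), (1 - Real.cos x) * x ^ (-1 - s)
      = π / (2 * Real.sin (π * s / 2) * Real.Gamma (s + 1)) := by
  set μ := volume.restrict (Ioi (0:ℝ)) with hμ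
  set f : ℝ → ℝ → ℝ :=
    fun x t => (1 - Real.cos x) * (t ^ s * Real.exp (-(x * t))) with hfdef
  have hmeas : AEStronglyMeasurable (uncurry f) (μ.prod μ) := by
    apply Measurable.aestronglyMeasurable
    exact (measurable_const.sub measurable_fst.cos).mul
      ((measurable_snd.pow_const _).mul (measurable_fst.mul measurable_snd).neg.exp)
  have hsec : ∀ x ∈ Ioi (0:ℝ), Integrable (fun t => f x t) μ := by
    intro x hx
    refine Integrable.const_mul ?_ _
    refine (integrableOn_rpow_mul_exp_neg_mul_rpow (by linarith : (-1:ℝ) < s)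
      one_pos hx).congr_fun (fun t _ => ?_) measurableSet_Ioi
    simp only [Real.rpow_one, neg_mul]
  have hinner : ∀ x ∈ Ioi (0:ℝ),
      ∫ t, f x t ∂μ = Real.Gamma (s + 1) * ((1 - Real.cos x) * x ^ (-1 - s)) := by
    intro x hx
    rw [hfdef]
    simp only
    rw [integral_const_mul, hμ]
    have h1 : ∫ t in Ioi (0:ℝ), t ^ s * Real.exp (-(x * t))
        = (1 / x) ^ (s + 1) * Real.Gamma (s + 1) := by
      rw [← integral_rpow_mul_exp_neg_mul_Ioi (by linarith : (0:ℝ) < s + 1) hx]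
      refine setIntegral_congr_fun measurableSet_Ioi (fun t _ => ?_)
      norm_num
    rw [h1]
    have hx0 : (0:ℝ) < x := hx
    rw [one_div, Real.inv_rpow hx0.le, ← Real.rpow_neg hx0.le,
      show -(s + 1) = -1 - s by ring]
    ring
  have hnorm : ∀ x ∈ Ioi (0:ℝ), ∫ t, ‖f x t‖ ∂μ = ∫ t, f x t ∂μ := by
    intro x hx
    refine integral_congr_ae ?_
    filter_upwards [ae_restrict_mem measurableSet_Ioi] with t ht
    have ht' : (0:ℝ) < t := ht
    have hcx : 0 ≤ 1 - Real.cos x := by nlinarith [Real.cos_le_one x]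
    rw [Real.norm_eq_abs, abs_of_nonneg]
    exact mul_nonneg hcx (mul_nonneg (Real.rpow_nonneg ht'.le _) (Real.exp_pos _).le)
  have hint : Integrable (uncurry f) (μ.prod μ) := by
    rw [integrable_prod_iff hmeas]
    constructor
    · filter_upwards [ae_restrict_mem measurableSet_Ioi] with x hx
      exact hsec x hx
    · have base : Integrable (fun x : ℝ =>
          Real.Gamma (s + 1) * ((1 - Real.cos x) * x ^ (-1 - s))) μ :=
        (integrableOn_one_sub_cos h0 h2).const_mul _
      refine base.congr ?_
      filter_upwards [ae_restrict_mem measurableSet_Ioi] with x hx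
      simp only [uncurry_apply_pair]
      rw [hnorm x hx, hinner x hx]
  have hswap := integral_integral_swap hint
  have hLHS : ∫ x, ∫ t, f x t ∂μ ∂μ =
      Real.Gamma (s + 1) * ∫ x in Ioi (0:ℝ), (1 - Real.cos x) * x ^ (-1 - s) := by
    rw [integral_congr_ae (g := fun x =>
        Real.Gamma (s + 1) * ((1 - Real.cos x) * x ^ (-1 - s)))]
    · rw [integral_const_mul, hμ]
    · filter_upwards [ae_restrict_mem measurableSet_Ioi] with x hx
      exact hinner x hx
  have hRHS : ∫ t, ∫ x, f x t ∂μ ∂μ = ∫ t in Ioi (0:ℝ), t ^ (s - 1) / (1 + t ^ 2) := by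
    rw [hμ]
    refine setIntegral_congr_fun measurableSet_Ioi (fun t ht => ?_)
    have ht0 : (0:ℝ) < t := ht
    have heq : ∀ x : ℝ, f x t = t ^ s * ((1 - Real.cos x) * Real.exp (-(t * x))) := by
      intro x
      rw [hfdef]
      simp only
      rw [mul_comm x t]
      ring
    simp_rw [heq]
    rw [integral_const_mul, integral_one_sub_cos_mul_exp ht0,
      Real.rpow_sub ht0, Real.rpow_one]
    have hc : (0:ℝ) < 1 + t ^ 2 := by positivity
    have hts : (0:ℝ) < t ^ s := Real.rpow_pos_of_pos ht0 s
    field_simp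
  have hJ := integral_rpow_div_one_add_sq_eq_Gamma h0 h2
  have hGpos := Gamma_add_one_pos h0
  have hrefl := Real.Gamma_mul_Gamma_one_sub (s / 2)
  have : Real.Gamma (s + 1) * ∫ x in Ioi (0:ℝ), (1 - Real.cos x) * x ^ (-1 - s)
      = π / Real.sin (π * (s / 2)) / 2 := by
    rw [← hrefl, ← hJ, ← hRHS, ← hswap, hLHS]
  rw [show π * (s / 2) = π * s / 2 by ring, div_div] at this
  rw [hμ]
  rw [show 2 * Real.sin (π * s / 2) * Real.Gamma (s + 1)
      = Real.sin (π * s / 2) * 2 * Real.Gamma (s + 1) by ring, ← div_div, ← this,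
    mul_div_cancel_left₀ _ hGpos.ne']
lemma integrable_comp_abs {f : ℝ → ℝ} (hf : IntegrableOn f (Ioi 0)) :
    Integrable (fun x : ℝ => f |x|) := by
  have hIoi : IntegrableOn (fun x : ℝ => f |x|) (Ioi 0) := by
    refine hf.congr_fun (fun x hx => ?_) measurableSet_Ioi
    rw [abs_eq_self.mpr (le_of_lt hx)]
  have hIic : IntegrableOn (fun x : ℝ => f |x|) (Iic 0) := by
    rw [← Measure.map_neg_eq_self (volume : Measure ℝ)]
    have m : MeasurableEmbedding fun x : ℝ => -x :=
      (Homeomorph.neg ℝ).measurableEmbedding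
    rw [m.integrableOn_map_iff]
    simp_rw [Function.comp_def, abs_neg, neg_preimage, neg_Iic, neg_zero]
    exact Iff.mpr integrableOn_Ici_iff_integrableOn_Ioi hIoi
  rw [← integrableOn_univ, ← Iic_union_Ioi (a := (0:ℝ)), integrableOn_union]
  exact ⟨hIic, hIoi⟩

lemma integrableOn_one_sub_cos_mul {s a : ℝ} (h0 : 0 < s) (h2 : s < 2) (ha : 0 < a) :
    IntegrableOn (fun x : ℝ => (1 - Real.cos (a * x)) * x ^ (-1 - s)) (Ioi 0) := by
  have base := integrableOn_one_sub_cos h0 h2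
  have h1 : IntegrableOn (fun x : ℝ =>
      (1 - Real.cos (a * x)) * (a * x) ^ (-1 - s)) (Ioi 0) := by
    have := (integrableOn_Ioi_comp_mul_left_iff
      (fun x : ℝ => (1 - Real.cos x) * x ^ (-1 - s)) 0 ha).mpr
    rw [mul_zero] at this
    exact this base
  have h2' := h1.const_mul (a ^ (1 + s))
  refine IntegrableOn.congr_fun h2' (fun x hx => ?_) measurableSet_Ioi
  have hx0 : (0:ℝ) < x := hx
  rw [Real.mul_rpow ha.le hx0.le, ← mul_assoc, mul_comm (a ^ (1+s)) (1 - Real.cos (a*x)),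
    mul_assoc, ← mul_assoc (a ^ (1+s)), ← Real.rpow_add ha]
  norm_num

lemma integral_one_sub_cos_mul {s a : ℝ} (h0 : 0 < s) (h2 : s < 2) (ha : 0 < a) :
    ∫ x in Ioi (0:ℝ), (1 - Real.cos (a * x)) * x ^ (-1 - s)
      = a ^ s * (π / (2 * Real.sin (π * s / 2) * Real.Gamma (s + 1))) := by
  have key := integral_comp_mul_left_Ioi
    (fun x : ℝ => (1 - Real.cos x) * x ^ (-1 - s)) 0 ha
  rw [mul_zero, smul_eq_mul, integral_one_sub_cos_rpow h0 h2] at key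
  have step : ∫ x in Ioi (0:ℝ), (1 - Real.cos (a * x)) * x ^ (-1 - s)
      = a ^ (1 + s) * ∫ x in Ioi (0:ℝ), (1 - Real.cos (a * x)) * (a * x) ^ (-1 - s) := by
    rw [← integral_const_mul]
    refine setIntegral_congr_fun measurableSet_Ioi (fun x hx => ?_)
    have hx0 : (0:ℝ) < x := hx
    rw [Real.mul_rpow ha.le hx0.le, ← mul_assoc, mul_comm (a ^ (1+s)) (1 - Real.cos (a*x)),
      mul_assoc, ← mul_assoc (a ^ (1+s)), ← Real.rpow_add ha]
    norm_num
  rw [step, key, ← mul_assoc, ← Real.rpow_neg_one a, ← Real.rpow_add ha]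
  norm_num [show 1 + s + -1 = s by ring]

/-- full line integral for `a ≥ 0` -/
lemma integral_one_sub_cos_abs {s a : ℝ} (h0 : 0 < s) (h2 : s < 2) (ha : 0 ≤ a) :
    (Integrable (fun ξ : ℝ => (1 - Real.cos (a * ξ)) * |ξ| ^ (-1 - s))) ∧
    ∫ ξ : ℝ, (1 - Real.cos (a * ξ)) * |ξ| ^ (-1 - s)
      = 2 * (a ^ s * (π / (2 * Real.sin (π * s / 2) * Real.Gamma (s + 1)))) := by
  rcases eq_or_lt_of_le ha with rfl | ha'
  · constructor
    · refine (integrable_zero _ _ _).congr ?_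
      filter_upwards with ξ
      simp
    · rw [show (0:ℝ) ^ s = 0 from Real.zero_rpow (ne_of_gt h0)]
      simp
  · have hfun : (fun ξ : ℝ => (1 - Real.cos (a * ξ)) * |ξ| ^ (-1 - s))
        = fun ξ : ℝ => (fun x => (1 - Real.cos (a * x)) * x ^ (-1 - s)) |ξ| := by
      funext ξ
      simp only
      rw [show a * |ξ| = |a * ξ| by rw [abs_mul, abs_of_nonneg ha], Real.cos_abs]
    constructor
    · rw [hfun]
      exact integrable_comp_abs (integrableOn_one_sub_cos_mul h0 h2 ha')
    · rw [hfun]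
      exact (integral_comp_abs
        (f := fun x => (1 - Real.cos (a * x)) * x ^ (-1 - s))).trans
        (by rw [integral_one_sub_cos_mul h0 h2 ha'])
lemma integrand_eq {s : ℝ} {n : ℕ} {ξ : ℝ} (hξ : ξ ≠ 0) :
    ((|ξ| ^ (1 - s) : ℝ) : ℂ) *
        (Complex.exp (-Complex.I * ((n : ℝ) + 1) * ξ) - Complex.exp (-Complex.I * (n : ℝ) * ξ)) *
        (Complex.exp (Complex.I * ξ) - 1) / (ξ : ℂ) ^ 2
      = ((2 * (1 - Real.cos ξ) * |ξ| ^ (-1 - s) : ℝ) : ℂ) *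
          Complex.exp (-Complex.I * (n : ℝ) * ξ) := by
  have hξC : (ξ:ℂ) ≠ 0 := Complex.ofReal_ne_zero.mpr hξ
  have habs : (0:ℝ) < |ξ| := abs_pos.mpr hξ
  have hA : Complex.exp (-Complex.I * ((n : ℝ) + 1) * ξ)
      = Complex.exp (-Complex.I * (n : ℝ) * ξ) * Complex.exp (-Complex.I * ξ) := by
    rw [← Complex.exp_add]
    congr 1
    push_cast
    ring
  have e1 : Complex.exp (Complex.I * ξ) = Complex.cos ξ + Complex.sin ξ * Complex.I := by
    rw [mul_comm, Complex.exp_mul_I]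
  have e2 : Complex.exp (-Complex.I * ξ) = Complex.cos ξ - Complex.sin ξ * Complex.I := by
    rw [show -Complex.I * (ξ:ℂ) = (-(ξ:ℂ)) * Complex.I by ring, Complex.exp_mul_I,
      Complex.cos_neg, Complex.sin_neg]
    ring
  have hab : (|ξ| ^ (1 - s) : ℝ) = |ξ| ^ (-1 - s) * ξ ^ 2 := by
    rw [← sq_abs, ← Real.rpow_natCast |ξ| 2, ← Real.rpow_add habs]
    norm_num [show -1 - s + 2 = 1 - s by ring]
  have hcast : ((2 * (1 - Real.cos ξ) * |ξ| ^ (-1 - s) : ℝ) : ℂ)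
      = 2 * (1 - Complex.cos ξ) * ((|ξ| ^ (-1 - s) : ℝ) : ℂ) := by
    push_cast [Complex.ofReal_cos]
    ring
  have hab' : ((|ξ| ^ (1 - s) : ℝ) : ℂ) = ((|ξ| ^ (-1 - s) : ℝ) : ℂ) * (ξ:ℂ) ^ 2 := by
    rw [hab]; push_cast; ring
  rw [div_eq_iff (pow_ne_zero 2 hξC), hA, e1, e2, hcast, hab']
  linear_combination (((|ξ| ^ (-1 - s) : ℝ) : ℂ) * (ξ:ℂ) ^ 2 *
    Complex.exp (-Complex.I * (n : ℝ) * ξ)) * (Complex.sin_sq_add_cos_sq (ξ:ℂ))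
    + (-(((|ξ| ^ (-1 - s) : ℝ) : ℂ) * (ξ:ℂ) ^ 2 *
      Complex.exp (-Complex.I * (n : ℝ) * ξ) * Complex.sin (ξ:ℂ) ^ 2)) * Complex.I_sq

theorem parseval_autocorrelation_of_increments
    (H : ℝ) (hH : H ∈ Set.Ioo (0 : ℝ) 1) (n : ℕ) (hn : 1 ≤ n) :
    Integrable (fun ξ : ℝ =>
        ((|ξ| ^ (1 - 2 * H) : ℝ) : ℂ) *
          (Complex.exp (-Complex.I * ((n : ℝ) + 1) * ξ) - Complex.exp (-Complex.I * (n : ℝ) * ξ)) *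
          (Complex.exp (Complex.I * ξ) - 1) / (ξ : ℂ) ^ 2) ∧
      (∫ ξ : ℝ,
          ((|ξ| ^ (1 - 2 * H) : ℝ) : ℂ) *
            (Complex.exp (-Complex.I * ((n : ℝ) + 1) * ξ) - Complex.exp (-Complex.I * (n : ℝ) * ξ)) *
            (Complex.exp (Complex.I * ξ) - 1) / (ξ : ℂ) ^ 2).im = 0 ∧
      (1 / (2 * π) : ℂ) *
          ∫ ξ : ℝ,
            ((|ξ| ^ (1 - 2 * H) : ℝ) : ℂ) *
              (Complex.exp (-Complex.I * ((n : ℝ) + 1) * ξ) - Complex.exp (-Complex.I * (n : ℝ) * ξ)) *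
              (Complex.exp (Complex.I * ξ) - 1) / (ξ : ℂ) ^ 2
        = (((((n : ℝ) + 1) ^ (2 * H) - 2 * (n : ℝ) ^ (2 * H) + ((n : ℝ) - 1) ^ (2 * H)) /
            (2 * Real.sin (π * H) * Real.Gamma (2 * H + 1)) : ℝ) : ℂ) := by
  obtain ⟨hH0, hH1⟩ := hH
  set s : ℝ := 2 * H with hs
  have hs0 : (0:ℝ) < s := by rw [hs]; linarith
  have hs2 : s < 2 := by rw [hs]; linarith
  set r : ℝ → ℝ := fun ξ : ℝ => 2 * (1 - Real.cos ξ) * |ξ| ^ (-1 - s) with hrdef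
  have hrmeas : Measurable r :=
    ((measurable_const.sub Real.measurable_cos).const_mul 2).mul
      (measurable_abs.pow_const _)
  have hrint : Integrable r := by
    have base : IntegrableOn (fun x : ℝ => 2 * (1 - Real.cos x) * x ^ (-1 - s)) (Ioi 0) := by
      have h := (integrableOn_one_sub_cos hs0 hs2).const_mul 2
      refine IntegrableOn.congr_fun h (fun x hx => by ring) measurableSet_Ioi
    refine (integrable_comp_abs base).congr ?_
    filter_upwards with ξ
    simp only [hrdef]
    rw [Real.cos_abs]
  have hrnonneg : ∀ ξ, 0 ≤ r ξ := by
    intro ξ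
    have h1 : 0 ≤ 1 - Real.cos ξ := by nlinarith [Real.cos_le_one ξ]
    have h2 := Real.rpow_nonneg (abs_nonneg ξ) (-1 - s)
    rw [hrdef]
    exact mul_nonneg (by linarith) h2
  set ψ : ℝ → ℂ := fun ξ => ((r ξ : ℝ) : ℂ) * Complex.exp (-Complex.I * (n : ℝ) * ξ)
    with hψdef
  have hψmeas : AEStronglyMeasurable ψ volume := by
    apply Measurable.aestronglyMeasurable
    refine (Complex.measurable_ofReal.comp hrmeas).mul ?_
    exact (Complex.continuous_exp.comp (by continuity)).measurable
  have hψnorm : ∀ ξ : ℝ, ‖ψ ξ‖ = r ξ := by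
    intro ξ
    rw [hψdef]
    simp only
    rw [norm_mul, Complex.norm_real, Real.norm_eq_abs, abs_of_nonneg (hrnonneg ξ),
      show -Complex.I * (n : ℝ) * (ξ:ℂ) = ((-((n:ℝ) * ξ) : ℝ) : ℂ) * Complex.I by
        push_cast; ring,
      Complex.norm_exp_ofReal_mul_I, mul_one]
  have hψint : Integrable ψ := by
    refine hrint.mono' hψmeas ?_
    filter_upwards with ξ
    rw [hψnorm ξ]
  have hae : (fun ξ : ℝ =>
        ((|ξ| ^ (1 - s) : ℝ) : ℂ) *
          (Complex.exp (-Complex.I * ((n : ℝ) + 1) * ξ) - Complex.exp (-Complex.I * (n : ℝ) * ξ)) *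
          (Complex.exp (Complex.I * ξ) - 1) / (ξ : ℂ) ^ 2) =ᵐ[volume] ψ := by
    have h0 : (volume : Measure ℝ) {0} = 0 := measure_singleton 0
    filter_upwards [compl_mem_ae_iff.mpr h0] with ξ hξ
    have hξ0 : ξ ≠ 0 := by simpa using hξ
    rw [hψdef]
    exact integrand_eq hξ0
  have hφint := hψint.congr hae.symm
  have hint_eq : (∫ ξ : ℝ,
      ((|ξ| ^ (1 - s) : ℝ) : ℂ) *
        (Complex.exp (-Complex.I * ((n : ℝ) + 1) * ξ) - Complex.exp (-Complex.I * (n : ℝ) * ξ)) *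
        (Complex.exp (Complex.I * ξ) - 1) / (ξ : ℂ) ^ 2) = ∫ ξ : ℝ, ψ ξ :=
    integral_congr_ae hae
  -- expansion of ψ into real and imaginary parts
  have hψ_expand : ∀ ξ : ℝ, ψ ξ = ((r ξ * Real.cos ((n:ℝ) * ξ) : ℝ) : ℂ)
      + ((-(r ξ * Real.sin ((n:ℝ) * ξ)) : ℝ) : ℂ) * Complex.I := by
    intro ξ
    rw [hψdef]
    simp only
    rw [show -Complex.I * (n : ℝ) * (ξ:ℂ) = ((-((n:ℝ) * ξ) : ℝ) : ℂ) * Complex.I by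
        push_cast; ring,
      Complex.exp_mul_I, ← Complex.ofReal_cos, ← Complex.ofReal_sin,
      Real.cos_neg, Real.sin_neg]
    push_cast
    ring
  have hcos_int : Integrable (fun ξ : ℝ => r ξ * Real.cos ((n:ℝ) * ξ)) := by
    refine hrint.mono' ?_ ?_
    · exact (hrmeas.mul ((Real.measurable_cos.comp
        (measurable_id.const_mul _)))).aestronglyMeasurable
    · filter_upwards with ξ
      rw [Real.norm_eq_abs, abs_mul]
      calc |r ξ| * |Real.cos ((n:ℝ) * ξ)| ≤ |r ξ| * 1 :=
            mul_le_mul_of_nonneg_left (Real.abs_cos_le_one _) (abs_nonneg _)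
        _ = r ξ := by rw [mul_one, abs_of_nonneg (hrnonneg ξ)]
  have hsin_int : Integrable (fun ξ : ℝ => r ξ * Real.sin ((n:ℝ) * ξ)) := by
    refine hrint.mono' ?_ ?_
    · exact (hrmeas.mul ((Real.measurable_sin.comp
        (measurable_id.const_mul _)))).aestronglyMeasurable
    · filter_upwards with ξ
      rw [Real.norm_eq_abs, abs_mul]
      calc |r ξ| * |Real.sin ((n:ℝ) * ξ)| ≤ |r ξ| * 1 :=
            mul_le_mul_of_nonneg_left (Real.abs_sin_le_one _) (abs_nonneg _)
        _ = r ξ := by rw [mul_one, abs_of_nonneg (hrnonneg ξ)]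
  have hsin_zero : ∫ ξ : ℝ, r ξ * Real.sin ((n:ℝ) * ξ) = 0 := by
    have key : ∫ ξ : ℝ, r ξ * Real.sin ((n:ℝ) * ξ)
        = - ∫ ξ : ℝ, r ξ * Real.sin ((n:ℝ) * ξ) := by
      conv_lhs => rw [← integral_neg_eq_self (fun ξ : ℝ => r ξ * Real.sin ((n:ℝ) * ξ)) volume]
      rw [← integral_neg]
      congr 1
      funext ξ
      simp only [hrdef, abs_neg, Real.cos_neg, mul_neg, Real.sin_neg]
    linarith
  -- the trig identity
  have trig : ∀ ξ : ℝ, r ξ * Real.cos ((n:ℝ) * ξ)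
      = (1 - Real.cos (((n:ℝ) + 1) * ξ)) * |ξ| ^ (-1 - s)
        + (1 - Real.cos (((n:ℝ) - 1) * ξ)) * |ξ| ^ (-1 - s)
        - 2 * ((1 - Real.cos ((n:ℝ) * ξ)) * |ξ| ^ (-1 - s)) := by
    intro ξ
    have h1 := Real.cos_add ((n:ℝ) * ξ) ξ
    have h2 := Real.cos_sub ((n:ℝ) * ξ) ξ
    rw [hrdef]
    simp only
    rw [show ((n:ℝ) + 1) * ξ = (n:ℝ) * ξ + ξ by ring,
      show ((n:ℝ) - 1) * ξ = (n:ℝ) * ξ - ξ by ring, h1, h2]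
    ring
  have hn1 : (1:ℝ) ≤ (n:ℝ) := by exact_mod_cast hn
  obtain ⟨ia, va⟩ := integral_one_sub_cos_abs (a := (n:ℝ) + 1) hs0 hs2 (by linarith)
  obtain ⟨ib, vb⟩ := integral_one_sub_cos_abs (a := (n:ℝ) - 1) hs0 hs2 (by linarith)
  obtain ⟨ic, vc⟩ := integral_one_sub_cos_abs (a := (n:ℝ)) hs0 hs2 (by linarith)
  have hcos_val : ∫ ξ : ℝ, r ξ * Real.cos ((n:ℝ) * ξ)
      = 2 * (((n:ℝ) + 1) ^ s * (π / (2 * Real.sin (π * s / 2) * Real.Gamma (s + 1))))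
        + 2 * (((n:ℝ) - 1) ^ s * (π / (2 * Real.sin (π * s / 2) * Real.Gamma (s + 1))))
        - 2 * (2 * ((n:ℝ) ^ s * (π / (2 * Real.sin (π * s / 2) * Real.Gamma (s + 1))))) := by
    rw [show (fun ξ : ℝ => r ξ * Real.cos ((n:ℝ) * ξ)) = fun ξ : ℝ =>
        (1 - Real.cos (((n:ℝ) + 1) * ξ)) * |ξ| ^ (-1 - s)
        + (1 - Real.cos (((n:ℝ) - 1) * ξ)) * |ξ| ^ (-1 - s)
        - 2 * ((1 - Real.cos ((n:ℝ) * ξ)) * |ξ| ^ (-1 - s)) from funext trig]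
    have iab : Integrable (fun ξ : ℝ =>
        (1 - Real.cos (((n:ℝ) + 1) * ξ)) * |ξ| ^ (-1 - s)
          + (1 - Real.cos (((n:ℝ) - 1) * ξ)) * |ξ| ^ (-1 - s)) volume := ia.add ib
    have ic2 : Integrable (fun ξ : ℝ =>
        2 * ((1 - Real.cos ((n:ℝ) * ξ)) * |ξ| ^ (-1 - s))) volume := ic.const_mul 2
    rw [integral_sub iab ic2, integral_add ia ib, integral_const_mul, va, vb, vc]
  have hψ_val : ∫ ξ : ℝ, ψ ξ
      = (((∫ ξ : ℝ, r ξ * Real.cos ((n:ℝ) * ξ)) : ℝ) : ℂ) := by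
    have i1 : Integrable (fun ξ : ℝ => ((r ξ * Real.cos ((n:ℝ) * ξ) : ℝ) : ℂ)) volume :=
      hcos_int.ofReal
    have i2 : Integrable (fun ξ : ℝ => ((-(r ξ * Real.sin ((n:ℝ) * ξ)) : ℝ) : ℂ)) volume :=
      hsin_int.neg.ofReal
    have i2' : Integrable (fun ξ : ℝ =>
        ((-(r ξ * Real.sin ((n:ℝ) * ξ)) : ℝ) : ℂ) * Complex.I) volume := i2.mul_const _
    rw [integral_congr_ae (Filter.Eventually.of_forall hψ_expand),
      integral_add i1 i2', integral_mul_const]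
    have e1 : (∫ a : ℝ, ((r a * Real.cos ((n:ℝ) * a) : ℝ) : ℂ))
        = ((∫ a : ℝ, r a * Real.cos ((n:ℝ) * a) : ℝ) : ℂ) := integral_ofReal
    have e2 : (∫ a : ℝ, ((-(r a * Real.sin ((n:ℝ) * a)) : ℝ) : ℂ))
        = ((∫ a : ℝ, -(r a * Real.sin ((n:ℝ) * a)) : ℝ) : ℂ) := integral_ofReal
    rw [e1, e2]
    have h0 : ∫ ξ : ℝ, -(r ξ * Real.sin ((n:ℝ) * ξ)) = 0 := by
      rw [integral_neg, hsin_zero, neg_zero]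
    rw [h0]
    simp
  refine ⟨hφint, ?_, ?_⟩
  · rw [hint_eq, hψ_val]
    simp
  · rw [hint_eq, hψ_val, hcos_val]
    have hπs : π * s / 2 = π * H := by rw [hs]; ring
    rw [hπs]
    have hsin : 0 < Real.sin (π * H) :=
      Real.sin_pos_of_pos_of_lt_pi (by positivity) (by nlinarith [Real.pi_pos])
    have hG : 0 < Real.Gamma (s + 1) := Real.Gamma_pos_of_pos (by linarith)
    have hπ : (0:ℝ) < π := Real.pi_pos
    rw [show (1 / (2 * (π:ℂ))) = (((1 / (2 * π) : ℝ)) : ℂ) by push_cast; ring,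
      ← Complex.ofReal_mul]
    congr 1
    field_simp
    ring
end

section
/- Let Ω be a set, let 𝒽 be a linear subspace of the real-valued functions on Ω containing the constant functions, and let Ê : 𝒽 → ℝ be a sublinear expectation, i.e. Ê is monotone, constant preserving, sub-additive, and positively homogeneous. Let X, X̄ ∈ 𝒽 with −X, −X̄, X+X̄, −(X+X̄) ∈ 𝒽, and assume: (a) X̄ is independent of X, meaning Ê[φ(X, X̄)] = Ê[ω ↦ ψ(X(ω))] where ψ(x) = Ê[φ(x, X̄)], for every continuous φ : ℝ² → ℝ of polynomial-Lipschitz growth (with all required compositions in 𝒽); (b) X̄ and X are identically distributed: Ê[φ(X)] = Ê[φ(X̄)] for all continuous φ : ℝ → ℝ of polynomial-Lipschitz growth; (c) X + X̄ and √2 · X are identically distributed. Then Ê[X] = 0 and −Ê[−X] = 0. -/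
/-- A continuous function of polynomial-Lipschitz growth on `ℝ`. -/
def PolyLip (φ : ℝ → ℝ) : Prop :=
  Continuous φ ∧ ∃ C : ℝ, 0 < C ∧ ∃ m : ℕ, ∀ x y : ℝ,
    |φ x - φ y| ≤ C * (1 + |x| ^ m + |y| ^ m) * |x - y|

/-- A continuous function of polynomial-Lipschitz growth on `ℝ²`. -/
def PolyLip2 (φ : ℝ × ℝ → ℝ) : Prop :=
  Continuous φ ∧ ∃ C : ℝ, 0 < C ∧ ∃ m : ℕ, ∀ x y : ℝ × ℝ,
    |φ x - φ y| ≤ C * (1 + ‖x‖ ^ m + ‖y‖ ^ m) * ‖x - y‖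

lemma plip_id : PolyLip (fun x : ℝ => x) := by
  refine ⟨continuous_id, 1, one_pos, 0, fun x y => ?_⟩
  simp only [pow_zero]
  nlinarith [abs_nonneg (x - y)]

lemma plip_neg : PolyLip (fun x : ℝ => -x) := by
  refine ⟨continuous_neg, 1, one_pos, 0, fun x y => ?_⟩
  have h : |(-x) - (-y)| = |x - y| := by
    rw [show (-x) - (-y) = -(x - y) by ring, abs_neg]
  simp only [pow_zero]
  rw [h]
  nlinarith [abs_nonneg (x - y)]

lemma plip2_key (x y : ℝ × ℝ) : |(x.1 + x.2) - (y.1 + y.2)| ≤ 2 * ‖x - y‖ := by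
  have h1 : |x.1 - y.1| ≤ ‖x - y‖ := by
    have := norm_fst_le (x - y)
    simpa [Prod.fst_sub, Real.norm_eq_abs] using this
  have h2 : |x.2 - y.2| ≤ ‖x - y‖ := by
    have := norm_snd_le (x - y)
    simpa [Prod.snd_sub, Real.norm_eq_abs] using this
  calc |(x.1 + x.2) - (y.1 + y.2)| = |(x.1 - y.1) + (x.2 - y.2)| := by ring_nf
    _ ≤ |x.1 - y.1| + |x.2 - y.2| := abs_add_le _ _
    _ ≤ 2 * ‖x - y‖ := by linarith

lemma plip2_add : PolyLip2 (fun p : ℝ × ℝ => p.1 + p.2) := by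
  refine ⟨by continuity, 2, two_pos, 0, fun x y => ?_⟩
  simp only [pow_zero]
  have := plip2_key x y
  nlinarith [norm_nonneg (x - y)]

lemma plip2_negadd : PolyLip2 (fun p : ℝ × ℝ => -p.1 + -p.2) := by
  refine ⟨by continuity, 2, two_pos, 0, fun x y => ?_⟩
  simp only [pow_zero]
  have h : |(-x.1 + -x.2) - (-y.1 + -y.2)| = |(x.1 + x.2) - (y.1 + y.2)| := by
    rw [show (-x.1 + -x.2) - (-y.1 + -y.2) = -((x.1 + x.2) - (y.1 + y.2)) by ring, abs_neg]
  rw [h]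
  have := plip2_key x y
  nlinarith [norm_nonneg (x - y)]

theorem G_normal_has_mean_zero
    {Ω : Type*} (𝒽 : Submodule ℝ (Ω → ℝ))
    (hconst𝒽 : ∀ c : ℝ, (fun _ : Ω => c) ∈ 𝒽)
    (E : (Ω → ℝ) → ℝ)
    -- sublinear expectation axioms on 𝒽:
    (hmono : ∀ X ∈ 𝒽, ∀ Y ∈ 𝒽, (∀ ω : Ω, Y ω ≤ X ω) → E Y ≤ E X)
    (hconst : ∀ c : ℝ, E (fun _ : Ω => c) = c)
    (hsubadd : ∀ X ∈ 𝒽, ∀ Y ∈ 𝒽, E (X + Y) ≤ E X + E Y)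
    (hposhom : ∀ X ∈ 𝒽, ∀ l : ℝ, 0 ≤ l → E (l • X) = l * E X)
    (X Xbar : Ω → ℝ) (hX : X ∈ 𝒽) (hXbar : Xbar ∈ 𝒽)
    -- all required compositions lie in 𝒽:
    (hcomp2 : ∀ φ : ℝ × ℝ → ℝ, PolyLip2 φ →
        (fun ω : Ω => φ (X ω, Xbar ω)) ∈ 𝒽 ∧
        (∀ x : ℝ, (fun ω : Ω => φ (x, Xbar ω)) ∈ 𝒽) ∧
        (fun ω : Ω => E (fun ω' : Ω => φ (X ω, Xbar ω'))) ∈ 𝒽)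
    (hcomp1 : ∀ φ : ℝ → ℝ, PolyLip φ →
        (fun ω : Ω => φ (X ω)) ∈ 𝒽 ∧ (fun ω : Ω => φ (Xbar ω)) ∈ 𝒽 ∧
        (fun ω : Ω => φ (X ω + Xbar ω)) ∈ 𝒽 ∧
        (fun ω : Ω => φ (Real.sqrt 2 * X ω)) ∈ 𝒽)
    -- (a) `Xbar` is independent of `X`:
    (hindep : ∀ φ : ℝ × ℝ → ℝ, PolyLip2 φ →
        E (fun ω : Ω => φ (X ω, Xbar ω))
          = E (fun ω : Ω => E (fun ω' : Ω => φ (X ω, Xbar ω'))))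
    -- (b) `X` and `Xbar` are identically distributed:
    (hid : ∀ φ : ℝ → ℝ, PolyLip φ →
        E (fun ω : Ω => φ (X ω)) = E (fun ω : Ω => φ (Xbar ω)))
    -- (c) `X + Xbar` and `√2 · X` are identically distributed:
    (hsum : ∀ φ : ℝ → ℝ, PolyLip φ →
        E (fun ω : Ω => φ (X ω + Xbar ω)) = E (fun ω : Ω => φ (Real.sqrt 2 * X ω))) :
    E X = 0 ∧ -E (-X) = 0 := by
  -- translation invariance by constants
  have htrans : ∀ Y ∈ 𝒽, ∀ c : ℝ, E (fun ω => Y ω + c) = E Y + c := by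
    intro Y hY c
    have hYc : (fun ω => Y ω + c) ∈ 𝒽 := 𝒽.add_mem hY (hconst𝒽 c)
    have h1 : E (fun ω => Y ω + c) ≤ E Y + c := by
      have := hsubadd Y hY (fun _ => c) (hconst𝒽 c)
      simp only [hconst] at this; exact this
    have h2 : E Y ≤ E (fun ω => Y ω + c) + (-c) := by
      have := hsubadd (fun ω => Y ω + c) hYc (fun _ => -c) (hconst𝒽 (-c))
      have heq : (fun ω => Y ω + c) + (fun _ => -c) = Y := by
        funext ω; simp
      rw [heq] at this
      simpa [hconst] using this
    linarith
  have sqrt2_nonneg : (0:ℝ) ≤ Real.sqrt 2 := Real.sqrt_nonneg 2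
  have sqrt2_sq : Real.sqrt 2 * Real.sqrt 2 = 2 :=
    Real.mul_self_sqrt (by norm_num)
  have sqrt2_lt : Real.sqrt 2 < 2 := by nlinarith
  have hnX : (-X : Ω → ℝ) ∈ 𝒽 := 𝒽.neg_mem hX
  -- E X = 0 part
  have hEX : E X = 0 := by
    have h1 : E (fun ω : Ω => X ω + Xbar ω) = E X + E Xbar := by
      have := hindep (fun p => p.1 + p.2) plip2_add
      simp only at this
      rw [this]
      have hinner : ∀ x : ℝ, E (fun ω' : Ω => x + Xbar ω') = E Xbar + x := by
        intro x
        have := htrans Xbar hXbar x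
        rw [← this]
        congr 1; funext ω; ring
      have : (fun ω : Ω => E (fun ω' : Ω => X ω + Xbar ω')) =
          (fun ω : Ω => E Xbar + X ω) := by
        funext ω; exact hinner (X ω)
      rw [this]
      have : (fun ω : Ω => E Xbar + X ω) = (fun ω : Ω => X ω + E Xbar) := by
        funext ω; ring
      rw [this]
      exact htrans X hX (E Xbar)
    have h2 : E Xbar = E X := by
      have := hid (fun x => x) plip_id
      exact this.symm
    have h3 : E (fun ω : Ω => X ω + Xbar ω) = Real.sqrt 2 * E X := by
      have := hsum (fun x => x) plip_id
      rw [this]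
      have heq : (fun ω : Ω => Real.sqrt 2 * X ω) = Real.sqrt 2 • X := rfl
      rw [heq, hposhom X hX _ sqrt2_nonneg]
    rw [h2] at h1
    have h5 : (2 - Real.sqrt 2) * E X = 0 := by ring_nf; linarith [h1, h3]
    rcases mul_eq_zero.mp h5 with h | h
    · linarith
    · exact h
  refine ⟨hEX, ?_⟩
  -- E (-X) = 0 part
  have h1 : E (fun ω : Ω => -X ω + -Xbar ω) = E (-X) + E (fun ω : Ω => -Xbar ω) := by
    have := hindep (fun p => -p.1 + -p.2) plip2_negadd
    simp only at this
    rw [this]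
    have hinner : ∀ x : ℝ, E (fun ω' : Ω => -x + -Xbar ω') = E (fun ω' => -Xbar ω') + -x := by
      intro x
      have hnXbar : (fun ω' : Ω => -Xbar ω') ∈ 𝒽 := 𝒽.neg_mem hXbar
      have := htrans (fun ω' => -Xbar ω') hnXbar (-x)
      rw [← this]
      congr 1; funext ω; ring
    have he : (fun ω : Ω => E (fun ω' : Ω => -X ω + -Xbar ω')) =
        (fun ω : Ω => -X ω + E (fun ω' : Ω => -Xbar ω')) := by
      funext ω
      rw [hinner (X ω)]; ring
    rw [he]
    have heq : (fun ω : Ω => -X ω + E (fun ω' : Ω => -Xbar ω')) =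
        (fun ω : Ω => (-X) ω + E (fun ω' : Ω => -Xbar ω')) := rfl
    rw [heq, htrans (-X) hnX _]
  have h2 : E (fun ω : Ω => -Xbar ω) = E (-X) := by
    have := hid (fun x => -x) plip_neg
    exact this.symm
  have h3 : E (fun ω : Ω => -X ω + -Xbar ω) = Real.sqrt 2 * E (-X) := by
    have := hsum (fun x => -x) plip_neg
    have heq : (fun ω : Ω => -X ω + -Xbar ω) = (fun ω : Ω => -(X ω + Xbar ω)) := by
      funext ω; ring
    rw [heq, this]
    have heq2 : (fun ω : Ω => -(Real.sqrt 2 * X ω)) = Real.sqrt 2 • (-X) := by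
      funext ω; simp [mul_comm]
    rw [heq2, hposhom (-X) hnX _ sqrt2_nonneg]
  rw [h2] at h1
  have h4 : 2 * E (-X) = Real.sqrt 2 * E (-X) := by linarith [h1, h3]
  have h5 : (2 - Real.sqrt 2) * E (-X) = 0 := by ring_nf; linarith [h1, h3]
  rcases mul_eq_zero.mp h5 with h | h
  · linarith
  · simp [h]
end
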